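/- For n ≥ 1, the quasi-distance function d_F̃ : Mₙ → ℝ is Lipschitz continuous with respect to the Frobenius norm with Lipschitz constant √2/2, i.e. |d_F̃(A) − d_F̃(B)| ≤ (√2/2)‖A − B‖ for all A, B ∈ Mₙ. -/
import Mathlib


open Matrix

attribute [local instance] Matrix.frobeniusNormedAddCommGroup Matrix.frobeniusNormedSpace

/-- Frobenius distance from `A` to the set of orthogonal matrices with determinant `1`. -/
noncomputable def rhoPlus {n : ℕ} (A : Matrix (Fin n) (Fin n) ℝ) : ℝ :=
  Metric.infDist A {Q : Matrix (Fin n) (Fin n) ℝ | Q * Qᵀ = 1 ∧ Q.det = 1}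

/-- Frobenius distance from `A` to the set of orthogonal matrices with determinant `-1`. -/
noncomputable def rhoMinus {n : ℕ} (A : Matrix (Fin n) (Fin n) ℝ) : ℝ :=
  Metric.infDist A {Q : Matrix (Fin n) (Fin n) ℝ | Q * Qᵀ = 1 ∧ Q.det = -1}

/-- The quasi-potential profile `f̃`. -/
noncomputable def ftilde (r : ℝ) : ℝ :=
  if r ≤ 1 then (1 / 4) * r ^ 2 * (2 - r) ^ 2 else 1 / 4

/-- `g(r) = ∫₀^r √(2 f̃(s)) ds`. -/
noncomputable def gfun (r : ℝ) : ℝ := ∫ s in (0 : ℝ)..r, Real.sqrt (2 * ftilde s)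

/-- The surface tension constant `c = 2 g(1)`. -/
noncomputable def cF : ℝ := 2 * gfun 1

/-- The quasi-distance function `d_F̃`. -/
noncomputable def dF {n : ℕ} (A : Matrix (Fin n) (Fin n) ℝ) : ℝ :=
  if rhoMinus A ≤ 1 then gfun (rhoMinus A)
  else if rhoPlus A ≤ 1 then cF - gfun (rhoPlus A)
  else cF / 2

/-! ### Auxiliary lemmas about `gfun` -/

lemma integrand_cont : Continuous (fun s => Real.sqrt (2 * ftilde s)) := by
  apply Real.continuous_sqrt.comp
  apply (continuous_const.mul _ : Continuous fun s => 2 * ftilde s)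
  unfold ftilde
  apply Continuous.if_le (by continuity) continuous_const continuous_id continuous_const
  intro x hx
  simp only [id] at hx
  subst hx; norm_num

lemma integrand_nonneg (s : ℝ) : 0 ≤ Real.sqrt (2 * ftilde s) := Real.sqrt_nonneg _

lemma integrand_le (s : ℝ) (hs : 0 ≤ s) : Real.sqrt (2 * ftilde s) ≤ Real.sqrt 2 / 2 := by
  have h2 : Real.sqrt (1/2) = Real.sqrt 2 / 2 := by
    have a : Real.sqrt (1/2) * Real.sqrt 2 = 1 := by
      rw [← Real.sqrt_mul (by norm_num)]; norm_num
    have m : Real.sqrt 2 * Real.sqrt 2 = 2 := Real.mul_self_sqrt (by norm_num)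
    rw [eq_div_iff (by norm_num : (2:ℝ) ≠ 0)]
    linear_combination Real.sqrt 2 * a - Real.sqrt (1/2) * m
  have key : 2 * ftilde s ≤ 1/2 := by
    unfold ftilde
    split_ifs with h
    · nlinarith [sq_nonneg (1-s), sq_nonneg (s*(2-s)), mul_nonneg hs (by linarith : (0:ℝ) ≤ 2-s)]
    · norm_num
  calc Real.sqrt (2 * ftilde s) ≤ Real.sqrt (1/2) := Real.sqrt_le_sqrt key
    _ = Real.sqrt 2 / 2 := h2

lemma gfun_sub (x y : ℝ) (_hx : 0 ≤ x) (_hxy : x ≤ y) :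
    gfun y - gfun x = ∫ s in x..y, Real.sqrt (2 * ftilde s) := by
  unfold gfun
  rw [sub_eq_iff_eq_add']
  exact (intervalIntegral.integral_add_adjacent_intervals
    (integrand_cont.intervalIntegrable _ _) (integrand_cont.intervalIntegrable _ _)).symm

lemma gfun_mono (x y : ℝ) (hx : 0 ≤ x) (hxy : x ≤ y) : gfun x ≤ gfun y := by
  have := intervalIntegral.integral_nonneg (μ := MeasureTheory.volume) hxy
    (fun u _ => integrand_nonneg u)
  rw [← gfun_sub x y hx hxy] at this; linarith

lemma gfun_lip (x y : ℝ) (hx : 0 ≤ x) (hxy : x ≤ y) :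
    gfun y - gfun x ≤ Real.sqrt 2 / 2 * (y - x) := by
  rw [gfun_sub x y hx hxy]
  calc ∫ s in x..y, Real.sqrt (2 * ftilde s) ≤ ∫ _ in x..y, Real.sqrt 2 / 2 := by
        apply intervalIntegral.integral_mono_on hxy (integrand_cont.intervalIntegrable _ _)
          (intervalIntegrable_const)
        intro s hs; exact integrand_le s (le_trans hx hs.1)
    _ = Real.sqrt 2 / 2 * (y - x) := by simp; ring

/-! ### Matrix geometry -/

lemma le_infDist' {α : Type*} [MetricSpace α] {b : ℝ} {x : α} {s : Set α}
    (hs : s.Nonempty) (h : ∀ y ∈ s, b ≤ dist x y) : b ≤ Metric.infDist x s := by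
  rw [Metric.infDist_eq_iInf]
  haveI : Nonempty s := hs.to_subtype
  exact le_ciInf fun y => h y y.2

lemma frob_norm_sq {n : ℕ} (X : Matrix (Fin n) (Fin n) ℝ) : ‖X‖^2 = (X * Xᵀ).trace := by
  have hS : (0:ℝ) ≤ ∑ i, ∑ j, ‖X i j‖ ^ (2:ℝ) := by positivity
  rw [Matrix.frobenius_norm_def, ← Real.rpow_natCast _ 2, ← Real.rpow_mul hS]
  norm_num
  simp only [Matrix.trace, Matrix.diag, Matrix.mul_apply, Matrix.transpose_apply]
  congr 1
  ext i
  congr 1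
  ext j
  rw [sq]

lemma frob_mul_orth {n : ℕ} (P X : Matrix (Fin n) (Fin n) ℝ) (hP : P * Pᵀ = 1) :
    ‖P * X‖ = ‖X‖ := by
  have h1 : Pᵀ * P = 1 := mul_eq_one_comm.mp hP
  have hsq : ‖P * X‖^2 = ‖X‖^2 := by
    rw [frob_norm_sq, frob_norm_sq, Matrix.transpose_mul,
      show P * X * (Xᵀ * Pᵀ) = P * (X * Xᵀ * Pᵀ) by noncomm_ring,
      Matrix.trace_mul_comm P, mul_assoc, h1, mul_one]
  exact (sq_eq_sq₀ (norm_nonneg _) (norm_nonneg _)).mp hsq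

lemma orth_dist {n : ℕ} (P Q : Matrix (Fin n) (Fin n) ℝ) (hP : P * Pᵀ = 1) (hdP : P.det = 1)
    (hQ : Q * Qᵀ = 1) (hdQ : Q.det = -1) : 2 ≤ ‖P - Q‖ := by
  have hP' : Pᵀ * P = 1 := mul_eq_one_comm.mp hP
  set R := Pᵀ * Q with hR
  have hRo : R * Rᵀ = 1 := by
    rw [hR, Matrix.transpose_mul, Matrix.transpose_transpose,
      show Pᵀ * Q * (Qᵀ * P) = Pᵀ * (Q * Qᵀ) * P by noncomm_ring, hQ, mul_one, hP']
  have hRo' : Rᵀ * R = 1 := mul_eq_one_comm.mp hRo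
  have hdR : R.det = -1 := by
    rw [hR, Matrix.det_mul, Matrix.det_transpose, hdP, hdQ]; ring
  have hdet : (1 + R).det = 0 := by
    have h1 : Rᵀ.det * (1 + R).det = (1 + R).det := by
      rw [← Matrix.det_mul, mul_add, mul_one, hRo',
        show Rᵀ + 1 = (1 + R)ᵀ by rw [Matrix.transpose_add, Matrix.transpose_one, add_comm],
        Matrix.det_transpose]
    rw [Matrix.det_transpose, hdR] at h1
    linarith
  obtain ⟨v, hv0, hv⟩ := (Matrix.exists_mulVec_eq_zero_iff).mpr hdet
  set V : Matrix (Fin n) (Fin n) ℝ := Matrix.of (fun i _ => v i) with hV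
  have hV0 : V ≠ 0 := by
    intro h
    apply hv0
    funext i
    have := congrFun (congrFun h i) i
    simpa [hV] using this
  have hRV : R * V = -V := by
    have hmv : R.mulVec v = -v := by
      have := hv
      rw [Matrix.add_mulVec, Matrix.one_mulVec] at this
      have : R.mulVec v = -v := by
        funext i
        have h2 := congrFun this i
        simp only [Pi.add_apply, Pi.zero_apply, Pi.neg_apply] at h2 ⊢
        linarith
      exact this
    apply Matrix.ext
    intro i j
    simp only [Matrix.mul_apply, hV, Matrix.of_apply, Matrix.neg_apply]
    have := congrFun hmv i
    simpa [Matrix.mulVec, dotProduct] using this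
  have hsubV : (1 - R) * V = V + V := by
    rw [sub_mul, one_mul, hRV, sub_neg_eq_add]
  have hnorm2 : ‖(1 - R) * V‖ = 2 * ‖V‖ := by
    rw [hsubV, show V + V = (2:ℝ) • V by rw [two_smul], norm_smul]
    norm_num
  have hle : ‖(1 - R) * V‖ ≤ ‖1 - R‖ * ‖V‖ := Matrix.frobenius_norm_mul _ _
  have hVpos : 0 < ‖V‖ := norm_pos_iff.mpr hV0
  have h2R : 2 ≤ ‖1 - R‖ := by
    rw [hnorm2] at hle
    exact le_of_mul_le_mul_right (by linarith) hVpos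
  have hPQ : P - Q = P * (1 - R) := by
    rw [mul_sub, mul_one, hR, ← mul_assoc, hP, one_mul]
  rw [hPQ, frob_mul_orth P _ hP]
  exact h2R

lemma rho_lip {n : ℕ} (A B : Matrix (Fin n) (Fin n) ℝ) (s : Set (Matrix (Fin n) (Fin n) ℝ)) :
    |Metric.infDist A s - Metric.infDist B s| ≤ ‖A - B‖ := by
  rw [abs_sub_le_iff]
  constructor
  · have := Metric.infDist_le_infDist_add_dist (x := A) (y := B) (s := s)
    rw [dist_eq_norm] at this; linarith
  · have := Metric.infDist_le_infDist_add_dist (x := B) (y := A) (s := s)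
    rw [dist_eq_norm, ← norm_neg, neg_sub] at this; linarith

lemma rho_sum {n : ℕ} (hn : 1 ≤ n) (A : Matrix (Fin n) (Fin n) ℝ) :
    2 ≤ rhoPlus A + rhoMinus A := by
  have hSp : Set.Nonempty {Q : Matrix (Fin n) (Fin n) ℝ | Q * Qᵀ = 1 ∧ Q.det = 1} :=
    ⟨1, by simp⟩
  have i0 : Fin n := ⟨0, hn⟩
  set Qd : Matrix (Fin n) (Fin n) ℝ := Matrix.diagonal (fun i => if i = i0 then -1 else 1)
    with hQd
  have hSm : Set.Nonempty {Q : Matrix (Fin n) (Fin n) ℝ | Q * Qᵀ = 1 ∧ Q.det = -1} := by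
    refine ⟨Qd, ?_, ?_⟩
    · rw [hQd, Matrix.diagonal_transpose, Matrix.diagonal_mul_diagonal]
      have hfun : (fun i => (if i = i0 then (-1:ℝ) else 1) * (if i = i0 then -1 else 1))
          = fun _ => (1:ℝ) := by
        funext i; split_ifs <;> norm_num
      rw [hfun]
      exact Matrix.diagonal_one
    · rw [hQd, Matrix.det_diagonal]
      simp
  have key : ∀ P ∈ {Q : Matrix (Fin n) (Fin n) ℝ | Q * Qᵀ = 1 ∧ Q.det = 1},
      2 - rhoMinus A ≤ dist A P := by
    intro P hP
    have h2 : 2 ≤ Metric.infDist P {Q : Matrix (Fin n) (Fin n) ℝ | Q * Qᵀ = 1 ∧ Q.det = -1} := by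
      apply le_infDist' hSm
      intro Q hQ
      rw [dist_eq_norm]
      exact orth_dist P Q hP.1 hP.2 hQ.1 hQ.2
    have h3 := Metric.infDist_le_infDist_add_dist (x := P) (y := A)
      (s := {Q : Matrix (Fin n) (Fin n) ℝ | Q * Qᵀ = 1 ∧ Q.det = -1})
    rw [dist_comm] at h3
    unfold rhoMinus
    linarith
  have := le_infDist' hSp key
  unfold rhoPlus rhoMinus at *
  linarith

/-! ### Main theorem -/

set_option maxHeartbeats 2000000 in
theorem stmt11 {n : ℕ} (hn : 1 ≤ n) (A B : Matrix (Fin n) (Fin n) ℝ) :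
    |dF A - dF B| ≤ (Real.sqrt 2 / 2) * ‖A - B‖ := by
  have hLpos : 0 < Real.sqrt 2 / 2 := by positivity
  set D := ‖A - B‖ with hD
  have hDpos : 0 ≤ D := norm_nonneg _
  set mA := rhoMinus A with hmA'
  set mB := rhoMinus B with hmB'
  set pA := rhoPlus A with hpA'
  set pB := rhoPlus B with hpB'
  have hmA : 0 ≤ mA := Metric.infDist_nonneg
  have hmB : 0 ≤ mB := Metric.infDist_nonneg
  have hpA : 0 ≤ pA := Metric.infDist_nonneg
  have hpB : 0 ≤ pB := Metric.infDist_nonneg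
  have hmlip : |mA - mB| ≤ D := rho_lip A B _
  have hplip : |pA - pB| ≤ D := rho_lip A B _
  have hmlip1 : mA - mB ≤ D := (le_abs_self _).trans hmlip
  have hmlip2 : mB - mA ≤ D := by rw [abs_sub_comm] at hmlip; exact (le_abs_self _).trans hmlip
  have hplip1 : pA - pB ≤ D := (le_abs_self _).trans hplip
  have hplip2 : pB - pA ≤ D := by rw [abs_sub_comm] at hplip; exact (le_abs_self _).trans hplip
  have hsumA : 2 ≤ pA + mA := rho_sum hn A
  have hsumB : 2 ≤ pB + mB := rho_sum hn B
  have hc : cF = 2 * gfun 1 := rfl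
  have gd : ∀ x y : ℝ, 0 ≤ x → 0 ≤ y → |gfun x - gfun y| ≤ Real.sqrt 2 / 2 * |x - y| := by
    intro x y hx hy
    rcases le_total x y with h | h
    · rw [abs_of_nonpos (by linarith [gfun_mono x y hx h]), abs_of_nonpos (by linarith)]
      have := gfun_lip x y hx h
      linarith
    · rw [abs_of_nonneg (by linarith [gfun_mono y x hy h]), abs_of_nonneg (by linarith)]
      have := gfun_lip y x hy h
      linarith
  unfold dF
  rw [← hmA', ← hmB', ← hpA', ← hpB']
  by_cases h1 : mA ≤ 1
  · rw [if_pos h1]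
    by_cases h3 : mB ≤ 1
    · rw [if_pos h3]
      calc |gfun mA - gfun mB| ≤ Real.sqrt 2 / 2 * |mA - mB| := gd _ _ hmA hmB
        _ ≤ Real.sqrt 2 / 2 * D := mul_le_mul_of_nonneg_left hmlip (le_of_lt hLpos)
    · rw [if_neg h3]
      by_cases h4 : pB ≤ 1
      · rw [if_pos h4]
        have hgmA : gfun mA ≤ gfun 1 := gfun_mono mA 1 hmA h1
        have hgpB : gfun pB ≤ gfun 1 := gfun_mono pB 1 hpB h4
        have e1 : gfun 1 - gfun mA ≤ Real.sqrt 2 / 2 * (1 - mA) := gfun_lip mA 1 hmA h1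
        have e2 : gfun 1 - gfun pB ≤ Real.sqrt 2 / 2 * (1 - pB) := gfun_lip pB 1 hpB h4
        have hABs : (1 - mA) + (1 - pB) ≤ D := by linarith
        have := mul_le_mul_of_nonneg_left hABs (le_of_lt hLpos)
        rw [abs_of_nonpos (by rw [hc]; linarith), hc]
        nlinarith [e1, e2]
      · rw [if_neg h4]
        have e1 : gfun 1 - gfun mA ≤ Real.sqrt 2 / 2 * (1 - mA) := gfun_lip mA 1 hmA h1
        have h1mA : 1 - mA ≤ D := by push_neg at h3; linarith
        have := mul_le_mul_of_nonneg_left h1mA (le_of_lt hLpos)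
        rw [abs_of_nonpos (by rw [hc]; linarith [gfun_mono mA 1 hmA h1]), hc]
        nlinarith [e1]
  · rw [if_neg h1]
    by_cases h2 : pA ≤ 1
    · rw [if_pos h2]
      by_cases h3 : mB ≤ 1
      · rw [if_pos h3]
        have hgmB : gfun mB ≤ gfun 1 := gfun_mono mB 1 hmB h3
        have hgpA : gfun pA ≤ gfun 1 := gfun_mono pA 1 hpA h2
        have e1 : gfun 1 - gfun mB ≤ Real.sqrt 2 / 2 * (1 - mB) := gfun_lip mB 1 hmB h3
        have e2 : gfun 1 - gfun pA ≤ Real.sqrt 2 / 2 * (1 - pA) := gfun_lip pA 1 hpA h2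
        have hABs : (1 - mB) + (1 - pA) ≤ D := by linarith
        have := mul_le_mul_of_nonneg_left hABs (le_of_lt hLpos)
        rw [abs_of_nonneg (by rw [hc]; linarith), hc]
        nlinarith [e1, e2]
      · rw [if_neg h3]
        by_cases h4 : pB ≤ 1
        · rw [if_pos h4]
          have h' : |gfun pB - gfun pA| ≤ Real.sqrt 2 / 2 * |pB - pA| := gd _ _ hpB hpA
          rw [abs_sub_comm] at hplip
          calc |cF - gfun pA - (cF - gfun pB)| = |gfun pB - gfun pA| := by ring_nf
            _ ≤ Real.sqrt 2 / 2 * |pB - pA| := h'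
            _ ≤ Real.sqrt 2 / 2 * D := mul_le_mul_of_nonneg_left hplip (le_of_lt hLpos)
        · rw [if_neg h4]
          have e : gfun 1 - gfun pA ≤ Real.sqrt 2 / 2 * (1 - pA) := gfun_lip pA 1 hpA h2
          have h1pA : 1 - pA ≤ D := by push_neg at h4; linarith
          have := mul_le_mul_of_nonneg_left h1pA (le_of_lt hLpos)
          rw [abs_of_nonneg (by rw [hc]; linarith [gfun_mono pA 1 hpA h2]), hc]
          nlinarith [e]
    · rw [if_neg h2]
      by_cases h3 : mB ≤ 1
      · rw [if_pos h3]
        have e1 : gfun 1 - gfun mB ≤ Real.sqrt 2 / 2 * (1 - mB) := gfun_lip mB 1 hmB h3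
        have h1mB : 1 - mB ≤ D := by push_neg at h1; linarith
        have := mul_le_mul_of_nonneg_left h1mB (le_of_lt hLpos)
        rw [abs_of_nonneg (by rw [hc]; linarith [gfun_mono mB 1 hmB h3]), hc]
        nlinarith [e1]
      · rw [if_neg h3]
        by_cases h4 : pB ≤ 1
        · rw [if_pos h4]
          have e : gfun 1 - gfun pB ≤ Real.sqrt 2 / 2 * (1 - pB) := gfun_lip pB 1 hpB h4
          have h1pB : 1 - pB ≤ D := by push_neg at h2; linarith
          have := mul_le_mul_of_nonneg_left h1pB (le_of_lt hLpos)
          rw [abs_of_nonpos (by rw [hc]; linarith [gfun_mono pB 1 hpB h4]), hc]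
          nlinarith [e]
        · rw [if_neg h4]
          simp only [sub_self, abs_zero]
          positivity
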